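/- arXiv:2205.08867 — 2 statements merged into one kernel-verified Lean document; each statement's English description precedes it below -/
import Mathlib

section
/- If (f,g) \in \dot H^1(\mathbb{R}^4)\times L^2(\mathbb{R}^4) with \|f\|_{\dot H^1} \le \|Q\|_{\dot H^1}, then \|f\|_{\dot H^1}^2 \le 4\,\mathcal{E}_Z(f,g). -/
open MeasureTheory

noncomputable section

abbrev R4 := EuclideanSpace ℝ (Fin 4)

/-- The homogeneous Sobolev norm `‖f‖_{Ḣ¹} = (∫ |∇f|²)^{1/2}`. -/
def H1norm (f : R4 → ℂ) : ℝ := Real.sqrt (∫ x : R4, ‖fderiv ℝ f x‖ ^ 2)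

/-- The `L²` norm of a real-valued function. -/
def L2norm (g : R4 → ℝ) : ℝ := Real.sqrt (∫ x : R4, g x ^ 2)

/-- The `L⁴` norm `(∫ |f|⁴)^{1/4}`. -/
def L4norm (f : R4 → ℂ) : ℝ := (∫ x : R4, ‖f x‖ ^ 4) ^ ((4 : ℝ)⁻¹)

/-- The Zakharov energy `E_Z(f,g) = ∫ ½|∇f|² + ¼|g|² + ½ Re(g)|f|²` (`g` real-valued). -/
def EZ (f : R4 → ℂ) (g : R4 → ℝ) : ℝ :=
  ∫ x : R4, ((1 / 2) * ‖fderiv ℝ f x‖ ^ 2 + (1 / 4) * g x ^ 2 + (1 / 2) * g x * ‖f x‖ ^ 2)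

/-!
Integrating the pointwise inequality `0 ≤ (g + |f|²)²` gives `-(2∫ g|f|² + ∫ g²) ≤ ‖f‖_{L⁴}⁴`,
so `4 E_Z(f,g) ≥ 2‖f‖²_{Ḣ¹} - ‖f‖⁴_{L⁴}`. Squaring the sharp Sobolev inequality and using
`‖f‖_{Ḣ¹} ≤ ‖Q‖_{Ḣ¹}` bounds `‖f‖⁴_{L⁴} ≤ ‖Q‖⁻²_{Ḣ¹} ‖f‖⁴_{Ḣ¹} ≤ ‖f‖²_{Ḣ¹}`.
-/

theorem sq_le_of_le_inv_mul_of_le_sq {l a Q : ℝ} (hl : 0 ≤ l) (ha : 0 ≤ a)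
    (hlQ : l ≤ Q⁻¹ * a) (haQ : a ≤ Q ^ 2) : l ^ 2 ≤ a :=
  calc l ^ 2 ≤ (Q⁻¹ * a) ^ 2 := pow_le_pow_left₀ hl hlQ 2
    _ = (Q ^ 2)⁻¹ * (a * a) := by ring
    _ ≤ (Q ^ 2)⁻¹ * (Q ^ 2 * a) := by gcongr
    _ = ((Q ^ 2)⁻¹ * Q ^ 2) * a := by ring
    _ ≤ a := mul_le_of_le_one_left ha inv_mul_le_one

theorem integral_sq_add_two_mul_integral_mul_add_integral_sq_nonneg {α : Type*}
    [MeasurableSpace α] {μ : Measure α} {u v : α → ℝ} (hu : Integrable (fun x => u x ^ 2) μ)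
    (huv : Integrable (fun x => u x * v x) μ) (hv : Integrable (fun x => v x ^ 2) μ) :
    0 ≤ ∫ x, u x ^ 2 ∂μ + 2 * ∫ x, u x * v x ∂μ + ∫ x, v x ^ 2 ∂μ := by
  have hsq : 0 ≤ ∫ x, (u x ^ 2 + 2 * (u x * v x) + v x ^ 2) ∂μ :=
    integral_nonneg fun x => by
      rw [Pi.zero_apply]
      nlinarith [sq_nonneg (u x + v x)]
  rwa [integral_add _ hv, integral_add hu (huv.const_mul 2), integral_const_mul] at hsq
  exact hu.add (huv.const_mul 2)

theorem H1norm_sq (f : R4 → ℂ) : H1norm f ^ 2 = ∫ x, ‖fderiv ℝ f x‖ ^ 2 :=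
  Real.sq_sqrt (integral_nonneg fun _ => by positivity)

theorem L4norm_sq_sq (f : R4 → ℂ) : (L4norm f ^ 2) ^ 2 = ∫ x, ‖f x‖ ^ 4 := by
  rw [← pow_mul]
  exact Real.rpow_inv_natCast_pow (integral_nonneg fun _ => by positivity) four_ne_zero

theorem EZ_eq_sum_integrals (f : R4 → ℂ) (g : R4 → ℝ)
    (hf1 : Integrable (fun x : R4 => ‖fderiv ℝ f x‖ ^ 2))
    (hg2 : Integrable (fun x : R4 => g x ^ 2))
    (hfg : Integrable (fun x : R4 => g x * ‖f x‖ ^ 2)) :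
    EZ f g = (1 / 2) * (∫ x, ‖fderiv ℝ f x‖ ^ 2) + (1 / 4) * (∫ x, g x ^ 2)
      + (1 / 2) * ∫ x, g x * ‖f x‖ ^ 2 := by
  have h1 := hf1.const_mul (1 / 2 : ℝ)
  have h2 := hg2.const_mul (1 / 4 : ℝ)
  simp_rw [EZ, mul_assoc (1 / 2 : ℝ) (g _)]
  rw [integral_add (f := fun x => 1 / 2 * ‖fderiv ℝ f x‖ ^ 2 + 1 / 4 * g x ^ 2) (h1.add h2)
    (hfg.const_mul _), integral_add h1 h2, integral_const_mul, integral_const_mul,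
    integral_const_mul]

theorem integral_norm_pow_four_le_of_H1norm_le {f : R4 → ℂ} {Qn : ℝ}
    (hSob : L4norm f ^ 2 ≤ Qn⁻¹ * H1norm f ^ 2) (hfQ : H1norm f ≤ Qn) :
    ∫ x, ‖f x‖ ^ 4 ≤ ∫ x, ‖fderiv ℝ f x‖ ^ 2 := by
  rw [← L4norm_sq_sq, ← H1norm_sq]
  exact sq_le_of_le_inv_mul_of_le_sq (by positivity) (sq_nonneg _) hSob
    (pow_le_pow_left₀ (Real.sqrt_nonneg _) hfQ 2)

theorem schrodinger_energy_le_energy_general (f : R4 → ℂ) (g : R4 → ℝ) (Qn : ℝ)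
    (hf1 : Integrable (fun x : R4 => ‖fderiv ℝ f x‖ ^ 2))
    (hf4 : Integrable (fun x : R4 => ‖f x‖ ^ 4))
    (hg2 : Integrable (fun x : R4 => g x ^ 2))
    (hfg : Integrable (fun x : R4 => g x * ‖f x‖ ^ 2))
    (hSob : L4norm f ^ 2 ≤ Qn⁻¹ * H1norm f ^ 2)
    (hfQ : H1norm f ≤ Qn) :
    H1norm f ^ 2 ≤ 4 * EZ f g := by
  have hL4 := integral_norm_pow_four_le_of_H1norm_le hSob hfQ
  have hpow_four : ∀ x, ‖f x‖ ^ 4 = (‖f x‖ ^ 2) ^ 2 := fun x => by ring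
  simp only [hpow_four] at hf4 hL4
  have hsq := integral_sq_add_two_mul_integral_mul_add_integral_sq_nonneg hg2 hfg hf4
  rw [EZ_eq_sum_integrals f g hf1 hg2 hfg, H1norm_sq]
  linarith

/-- If ‖f‖_{Ḣ¹} ≤ ‖Q‖_{Ḣ¹} then ‖f‖_{Ḣ¹}² ≤ 4 E_Z(f,g).  Here `Qn` denotes ‖Q‖_{Ḣ¹},
and the sharp Sobolev inequality is assumed. -/
theorem schrodinger_energy_le_energy (f : R4 → ℂ) (g : R4 → ℝ) (Qn : ℝ) (hQn : 0 < Qn)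
    (hf1 : Integrable (fun x : R4 => ‖fderiv ℝ f x‖ ^ 2))
    (hf4 : Integrable (fun x : R4 => ‖f x‖ ^ 4))
    (hg2 : Integrable (fun x : R4 => g x ^ 2))
    (hfg : Integrable (fun x : R4 => g x * ‖f x‖ ^ 2))
    (hSob : L4norm f ^ 2 ≤ Qn⁻¹ * H1norm f ^ 2)
    (hfQ : H1norm f ≤ Qn) :
    H1norm f ^ 2 ≤ 4 * EZ f g :=
  schrodinger_energy_le_energy_general f g Qn hf1 hf4 hg2 hfg hSob hfQ
end
end

section
/- For (f,g)\in \dot H^1(\mathbb{R}^4)\times L^2(\mathbb{R}^4), one has the lower bound 4\mathcal{E}_Z(f,g) \ge \|g\|_{L^2}^2 + 2\|Q\|_{\dot H^1}^{-1}\|f\|_{\dot H^1}^2(\|Q\|_{\dot H^1} - \|g\|_{L^2}). -/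
open MeasureTheory

noncomputable section

/-!
Expanding, `4 E_Z(f,g) = 2‖f‖²_{Ḣ¹} + ‖g‖²_{L²} + 2∫ g|f|²`. By Cauchy–Schwarz and the sharp
Sobolev inequality the cross term is at least `-‖g‖_{L²}‖f‖²_{L⁴} ≥ -‖g‖_{L²}‖Q‖⁻¹_{Ḣ¹}‖f‖²_{Ḣ¹}`,
which rearranges to the bound.
-/

section CauchySchwarz

variable {α : Type*} [MeasurableSpace α] {μ : Measure α} {u v : α → ℝ}

theorem sq_integral_mul_le_integral_sq_mul_integral_sq (hu : Integrable (fun x => u x ^ 2) μ)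
    (hv : Integrable (fun x => v x ^ 2) μ) (huv : Integrable (fun x => u x * v x) μ) :
    (∫ x, u x * v x ∂μ) ^ 2 ≤ (∫ x, u x ^ 2 ∂μ) * ∫ x, v x ^ 2 ∂μ := by
  have hquad : ∀ t : ℝ, 0 ≤ (∫ x, v x ^ 2 ∂μ) * (t * t) + 2 * (∫ x, u x * v x ∂μ) * t
      + ∫ x, u x ^ 2 ∂μ := fun t => by
    have hsq : ∫ x, (u x + t * v x) ^ 2 ∂μ = (∫ x, v x ^ 2 ∂μ) * (t * t)
        + 2 * (∫ x, u x * v x ∂μ) * t + ∫ x, u x ^ 2 ∂μ := by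
      have hexpand : (fun x => (u x + t * v x) ^ 2)
          = fun x => u x ^ 2 + ((2 * t) * (u x * v x) + (t * t) * v x ^ 2) := by
        funext x; ring
      rw [hexpand, integral_add hu ((huv.const_mul _).fun_add (hv.const_mul _)),
        integral_add (huv.const_mul _) (hv.const_mul _), integral_const_mul, integral_const_mul]
      ring
    exact hsq ▸ integral_nonneg fun x => sq_nonneg _
  have hdisc := discrim_le_zero hquad
  rw [discrim] at hdisc
  linarith

theorem abs_integral_mul_le_sqrt_mul_sqrt (hu : Integrable (fun x => u x ^ 2) μ)
    (hv : Integrable (fun x => v x ^ 2) μ) (huv : Integrable (fun x => u x * v x) μ) :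
    |∫ x, u x * v x ∂μ| ≤ √(∫ x, u x ^ 2 ∂μ) * √(∫ x, v x ^ 2 ∂μ) := by
  rw [← Real.sqrt_mul (integral_nonneg fun x => sq_nonneg _)]
  exact Real.abs_le_sqrt (sq_integral_mul_le_integral_sq_mul_integral_sq hu hv huv)

end CauchySchwarz

theorem L4norm_sq (f : R4 → ℂ) : L4norm f ^ 2 = √(∫ x : R4, ‖f x‖ ^ 4) := by
  have hD : 0 ≤ ∫ x : R4, ‖f x‖ ^ 4 := integral_nonneg fun x => by positivity
  rw [L4norm, ← Real.rpow_natCast, ← Real.rpow_mul hD, Real.sqrt_eq_rpow]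
  norm_num

theorem abs_integral_mul_normSq_le_L2norm_mul_L4norm_sq {f : R4 → ℂ} {g : R4 → ℝ}
    (hf4 : Integrable (fun x : R4 => ‖f x‖ ^ 4)) (hg2 : Integrable (fun x : R4 => g x ^ 2))
    (hfg : Integrable (fun x : R4 => g x * ‖f x‖ ^ 2)) :
    |∫ x : R4, g x * ‖f x‖ ^ 2| ≤ L2norm g * L4norm f ^ 2 := by
  have hpow : ∀ x : R4, (‖f x‖ ^ 2) ^ 2 = ‖f x‖ ^ 4 := fun x => by ring
  have hCS := abs_integral_mul_le_sqrt_mul_sqrt hg2 (by simpa only [hpow] using hf4) hfg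
  simpa only [hpow, L4norm_sq, L2norm] using hCS

theorem four_mul_EZ {f : R4 → ℂ} {g : R4 → ℝ}
    (hf1 : Integrable (fun x : R4 => ‖fderiv ℝ f x‖ ^ 2))
    (hg2 : Integrable (fun x : R4 => g x ^ 2))
    (hfg : Integrable (fun x : R4 => g x * ‖f x‖ ^ 2)) :
    4 * EZ f g = 2 * H1norm f ^ 2 + L2norm g ^ 2 + 2 * ∫ x : R4, g x * ‖f x‖ ^ 2 := by
  have hassoc : ∀ x : R4, (1 / 2 : ℝ) * g x * ‖f x‖ ^ 2 = (1 / 2) * (g x * ‖f x‖ ^ 2) :=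
    fun x => mul_assoc _ _ _
  rw [EZ, H1norm, L2norm, Real.sq_sqrt (integral_nonneg fun x => sq_nonneg _),
    Real.sq_sqrt (integral_nonneg fun x => sq_nonneg _)]
  simp only [hassoc]
  rw [integral_add ((hf1.const_mul _).fun_add (hg2.const_mul _)) (hfg.const_mul _),
    integral_add (hf1.const_mul _) (hg2.const_mul _), integral_const_mul, integral_const_mul,
    integral_const_mul]
  ring

/-- The lower bound ,
with `Qn` denoting ‖Q‖_{Ḣ¹} and the sharp Sobolev inequality assumed. -/
theorem energy_lower_bound_wave (f : R4 → ℂ) (g : R4 → ℝ) (Qn : ℝ) (hQn : 0 < Qn)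
    (hf1 : Integrable (fun x : R4 => ‖fderiv ℝ f x‖ ^ 2))
    (hf4 : Integrable (fun x : R4 => ‖f x‖ ^ 4))
    (hg2 : Integrable (fun x : R4 => g x ^ 2))
    (hfg : Integrable (fun x : R4 => g x * ‖f x‖ ^ 2))
    (hSob : L4norm f ^ 2 ≤ Qn⁻¹ * H1norm f ^ 2)
    :
    L2norm g ^ 2 + 2 * Qn⁻¹ * H1norm f ^ 2 * (Qn - L2norm g) ≤ 4 * EZ f g := by
  have hcross : -(L2norm g * (Qn⁻¹ * H1norm f ^ 2)) ≤ ∫ x : R4, g x * ‖f x‖ ^ 2 := calc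
    -(L2norm g * (Qn⁻¹ * H1norm f ^ 2)) ≤ -(L2norm g * L4norm f ^ 2) :=
      neg_le_neg (mul_le_mul_of_nonneg_left hSob (Real.sqrt_nonneg _))
    _ ≤ ∫ x : R4, g x * ‖f x‖ ^ 2 :=
      neg_le_of_abs_le (abs_integral_mul_normSq_le_L2norm_mul_L4norm_sq hf4 hg2 hfg)
  have hcancel : Qn⁻¹ * Qn = 1 := inv_mul_cancel₀ hQn.ne'
  rw [four_mul_EZ hf1 hg2 hfg]
  linear_combination 2 * hcross + 2 * H1norm f ^ 2 * hcancel
end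
end
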